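/- Assume in addition that p is odd, δ > 0 and β > −1. Let u be twice differentiable on [x₀, x₁) ⊆ (0, 1) and satisfy the example equation there, and set H(x) := (1 − x²)·u'(x)²/2 − γ·u(x)²/2 + (δ/(p+1))·u(x)^{p+1}. Then the infimum V := inf_{w ∈ ℝ} [ (δ/(p+1))·w^{p+1} − (γ/2)·w² ] is finite, H(x) ≤ H(x₀) for all x ∈ [x₀, x₁), and consequently (1 − x²)·u'(x)² ≤ 2(H(x₀) − V) for all x ∈ [x₀, x₁). -/

import Mathlib

set_option autoImplicit false

open Real Set

/-- The Lyapunov function for the example equation. -/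
noncomputable def exampleH (p : ℕ) (γ δ : ℝ) (u : ℝ → ℝ) (x : ℝ) : ℝ :=
  (1 - x ^ 2) * (deriv u x) ^ 2 / 2 - γ * (u x) ^ 2 / 2
    + δ / ((p : ℝ) + 1) * u x ^ (p + 1)

/-!
Along a solution, `H` is an energy whose derivative is `-((1 + β) x + α / x) u'(x)²`, which is
nonpositive on `(0, 1)` when `α > 0` and `β > -1`; so `H` decreases. The potential part of `H` is
an even polynomial of degree `p + 1 ≥ 4` with positive leading coefficient, hence bounded below,
so the kinetic part `(1 - x²) u'²/2 = H - potential` is at most `H(x₀) - V`.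
-/

lemma bddBelow_range_mul_pow_sub_mul_sq {a : ℝ} (ha : 0 < a) (b : ℝ) {n : ℕ} (hn : Even n)
    (hn4 : 4 ≤ n) : BddBelow (range fun w : ℝ => a * w ^ n - b * w ^ 2) := by
  refine ⟨-(|b| + b ^ 2 / (4 * a)), ?_⟩
  rintro _ ⟨w, rfl⟩
  have hb2 : 0 ≤ b ^ 2 / (4 * a) := by positivity
  rcases le_total (w ^ 2) 1 with hw | hw
  · have hpow : 0 ≤ a * w ^ n := mul_nonneg ha.le (hn.pow_nonneg w)
    have hbw : b * w ^ 2 ≤ |b| := by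
      nlinarith [le_abs_self b, abs_nonneg b, sq_nonneg w]
    linarith
  · obtain ⟨k, rfl⟩ := hn
    have hpow : (w ^ 2) ^ 2 ≤ w ^ (k + k) := by
      rw [← two_mul, pow_mul]
      exact pow_le_pow_right₀ hw (by omega)
    -- completing the square: `4a (a t² - b t) + b² = (2 a t - b)²`
    have hsq : -(b ^ 2 / (4 * a)) ≤ a * (w ^ 2) ^ 2 - b * w ^ 2 := by
      rw [neg_le_iff_add_nonneg, ← mul_nonneg_iff_of_pos_left (by positivity : (0 : ℝ) < 4 * a)]
      convert sq_nonneg (2 * a * w ^ 2 - b) using 1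
      field_simp
      ring
    nlinarith [abs_nonneg b]

lemma Convex.antitoneOn_of_hasDerivAt_nonpos {D : Set ℝ} (hD : Convex ℝ D) {f f' : ℝ → ℝ}
    (hf : ∀ x ∈ D, HasDerivAt f (f' x) x) (hf' : ∀ x ∈ D, f' x ≤ 0) : AntitoneOn f D :=
  antitoneOn_of_hasDerivWithinAt_nonpos hD
    (fun x hx => (hf x hx).continuousAt.continuousWithinAt)
    (fun x hx => (hf x (interior_subset hx)).hasDerivWithinAt)
    (fun x hx => hf' x (interior_subset hx))

lemma exampleH_eq (p : ℕ) (γ δ : ℝ) (u : ℝ → ℝ) (x : ℝ) :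
    exampleH p γ δ u x = (1 - x ^ 2) * deriv u x ^ 2 / 2
      + (δ / ((p : ℝ) + 1) * u x ^ (p + 1) - γ / 2 * u x ^ 2) := by
  rw [exampleH]
  ring

lemma hasDerivAt_exampleH (p : ℕ) (γ δ : ℝ) {u : ℝ → ℝ} {x : ℝ} (hu : DifferentiableAt ℝ u x)
    (hu' : DifferentiableAt ℝ (deriv u) x) :
    HasDerivAt (exampleH p γ δ u)
      (deriv u x * ((1 - x ^ 2) * deriv (deriv u) x - x * deriv u x - γ * u x + δ * u x ^ p))
      x := by
  have hkin := (((hasDerivAt_pow 2 x).const_sub 1).mul (hu'.hasDerivAt.pow 2)).div_const 2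
  have hquad := ((hu.hasDerivAt.pow 2).const_mul γ).div_const 2
  have hpot := (hu.hasDerivAt.pow (p + 1)).const_mul (δ / ((p : ℝ) + 1))
  refine ((hkin.sub hquad).add hpot).congr_deriv ?_
  simp only [Pi.pow_apply, Nat.add_sub_cancel]
  push_cast
  field_simp
  ring

lemma hasDerivAt_exampleH_of_solution {p : ℕ} {α β γ δ : ℝ} {u : ℝ → ℝ} {x : ℝ}
    (hu : DifferentiableAt ℝ u x) (hu' : DifferentiableAt ℝ (deriv u) x)
    (heq : (1 - x ^ 2) * deriv (deriv u) x + (α / x + β * x) * deriv u x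
        - γ * u x + δ * u x ^ p = 0) :
    HasDerivAt (exampleH p γ δ u) (-((1 + β) * x + α / x) * deriv u x ^ 2) x := by
  convert hasDerivAt_exampleH p γ δ hu hu' using 1
  linear_combination (-deriv u x) * heq

/-- For odd `p`, `δ > 0`, `β > -1`, along a twice differentiable solution of
the example equation on `[x₀, x₁) ⊆ (0,1)`, the potential
`V = inf_w (δ/(p+1) w^{p+1} - (γ/2) w²)` is finite, `H(x) ≤ H(x₀)`, and
`(1-x²) u'(x)² ≤ 2(H(x₀) - V)` on `[x₀, x₁)`. -/
theorem exampleEquation_lyapunov_bound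
    (p : ℕ) (hp : 1 < p) (α β γ δ : ℝ) (hα : 0 < α) (hδ : 0 < δ)
    (hodd : Odd p) (hβ : -1 < β)
    (x₀ x₁ : ℝ) (hx : Ico x₀ x₁ ⊆ Ioo (0 : ℝ) 1)
    (u : ℝ → ℝ)
    (hdiff : ∀ x ∈ Ico x₀ x₁, DifferentiableAt ℝ u x)
    (hdiff2 : ∀ x ∈ Ico x₀ x₁, DifferentiableAt ℝ (deriv u) x)
    (heq : ∀ x ∈ Ico x₀ x₁,
      (1 - x ^ 2) * deriv (deriv u) x + (α / x + β * x) * deriv u x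
        - γ * u x + δ * u x ^ p = 0) :
    BddBelow (Set.range fun w : ℝ => δ / ((p : ℝ) + 1) * w ^ (p + 1) - γ / 2 * w ^ 2) ∧
    (∀ x ∈ Ico x₀ x₁, exampleH p γ δ u x ≤ exampleH p γ δ u x₀) ∧
    ∀ x ∈ Ico x₀ x₁,
      (1 - x ^ 2) * (deriv u x) ^ 2
        ≤ 2 * (exampleH p γ δ u x₀
            - sInf (Set.range fun w : ℝ => δ / ((p : ℝ) + 1) * w ^ (p + 1) - γ / 2 * w ^ 2)) := by
  have hbdd := bddBelow_range_mul_pow_sub_mul_sq (by positivity : 0 < δ / ((p : ℝ) + 1)) (γ / 2)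
    hodd.add_one (by obtain ⟨m, rfl⟩ := hodd; omega)
  have hanti : AntitoneOn (exampleH p γ δ u) (Ico x₀ x₁) := by
    refine (convex_Ico x₀ x₁).antitoneOn_of_hasDerivAt_nonpos
      (fun x hx' => hasDerivAt_exampleH_of_solution (hdiff x hx') (hdiff2 x hx') (heq x hx'))
      fun x hx' => ?_
    have hxpos : 0 < x := (hx hx').1
    have hdamp : 0 < (1 + β) * x + α / x := by
      have : 0 < (1 + β) * x := mul_pos (by linarith) hxpos
      positivity
    exact mul_nonpos_of_nonpos_of_nonneg (neg_nonpos.mpr hdamp.le) (sq_nonneg _)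
  have hmono : ∀ x ∈ Ico x₀ x₁, exampleH p γ δ u x ≤ exampleH p γ δ u x₀ := fun x hx' =>
    hanti ⟨le_rfl, hx'.1.trans_lt hx'.2⟩ hx' hx'.1
  refine ⟨hbdd, hmono, fun x hx' => ?_⟩
  have hV := csInf_le hbdd ⟨u x, rfl⟩
  have hHx := hmono x hx'
  rw [exampleH_eq] at hHx
  linarith
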